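/- Let f be analytic on the open unit disk 𝔻 with f(0)=0 and f'(0)=1, and let λ ≥ 0 be real. If |f'(z) - 1|^{1-λ} · |1 + z·f''(z)/f'(z)|^{λ} < (3/2)^{λ} for all z ∈ 𝔻 (with f'(z) ≠ 0), then |f'(z) - 1| < 1 for all z ∈ 𝔻. -/

import Mathlib

/-!
Put `w = f' - 1`, so that `w 0 = 0`. If `‖w‖ < 1` failed somewhere in the disc, a point `z₀` of
least modulus with `‖w z₀‖ = 1` would satisfy `‖w‖ ≤ 1` on `‖z‖ ≤ ‖z₀‖`. Jack's lemma then gives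
`z₀ w'(z₀) = c w(z₀)` with `c ≥ 1`: along the circle through `z₀` the function
`Re (w z · conj (w z₀))` is maximal at `z₀`, so its tangential derivative vanishes, and along the
radius Schwarz's lemma bounds its derivative below by `‖w z₀‖²`. Hence
`1 + z₀ f''(z₀)/f'(z₀) = 1 + c · W/(1 + W)` with `‖W‖ = 1`; as `W/(1 + W)` has real part `1/2`,
this has modulus at least `3/2`, which contradicts the hypothesis at `z₀`, where `‖f'(z₀) - 1‖ = 1`.
-/

open Complex ComplexConjugate Metric Set Filter Topology

theorem HasDerivAt.nonneg_of_eventually_le_left {φ : ℝ → ℝ} {d x : ℝ} (h : HasDerivAt φ d x)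
    (hle : ∀ᶠ t in 𝓝[<] x, φ t ≤ φ x) : 0 ≤ d := by
  refine ge_of_tendsto (hasDerivAt_iff_tendsto_slope.1 h |>.mono_left (nhdsLT_le_nhdsNE x)) ?_
  filter_upwards [hle, self_mem_nhdsWithin] with t hφ (ht : t < x)
  rw [slope_def_field]
  exact div_nonneg_of_nonpos (sub_nonpos.2 hφ) (sub_nonpos.2 ht.le)

theorem exists_norm_eq_forall_closedBall_norm_le {E F : Type*} [NormedAddCommGroup E]
    [NormedSpace ℝ E] [ProperSpace E] [NormedAddCommGroup F] {w : E → F} {R M : ℝ} {z₁ : E}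
    (hw : ContinuousOn w (ball 0 R)) (hw₀ : ‖w 0‖ < M) (hz₁ : z₁ ∈ ball 0 R) (hM : M ≤ ‖w z₁‖) :
    ∃ z₀ ∈ ball 0 R, ‖w z₀‖ = M ∧ ∀ z ∈ closedBall 0 ‖z₀‖, ‖w z‖ ≤ M := by
  set B := closedBall (0 : E) ‖z₁‖
  have hBR : B ⊆ ball 0 R := closedBall_subset_ball (by simpa using hz₁)
  have hcont : ContinuousOn (fun z => ‖w z‖) B := (hw.mono hBR).norm
  have hK : IsCompact (B ∩ {z | M ≤ ‖w z‖}) :=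
    (isCompact_closedBall 0 _).of_isClosed_subset
      (hcont.preimage_isClosed_of_isClosed isClosed_closedBall isClosed_Ici) inter_subset_left
  obtain ⟨z₀, ⟨hz₀B, hMz₀⟩, hmin⟩ :=
    hK.exists_isMinOn ⟨z₁, by simp [B], hM⟩ continuous_norm.continuousOn
  have hz₀ : z₀ ≠ 0 := by rintro rfl; exact hw₀.not_ge hMz₀
  have hlt : ball 0 ‖z₀‖ ⊆ B ∩ {z | ‖w z‖ ≤ M} := fun z hz => by
    have hzB : z ∈ B :=
      closedBall_subset_closedBall (mem_closedBall_zero_iff.1 hz₀B) (ball_subset_closedBall hz)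
    refine ⟨hzB, show ‖w z‖ ≤ M from not_lt.1 fun hMz => ?_⟩
    exact (mem_ball_zero_iff.1 hz).not_ge (hmin ⟨hzB, hMz.le⟩)
  have hle : closedBall 0 ‖z₀‖ ⊆ B ∩ {z | ‖w z‖ ≤ M} := by
    rw [← closure_ball 0 (norm_ne_zero_iff.2 hz₀)]
    exact closure_minimal hlt (hcont.preimage_isClosed_of_isClosed isClosed_closedBall isClosed_Iic)
  exact ⟨z₀, hBR hz₀B, le_antisymm (hle (by simp)).2 hMz₀, fun z hz => (hle hz).2⟩

theorem re_mul_conj_le_norm_mul_norm (a b : ℂ) : (a * conj b).re ≤ ‖a‖ * ‖b‖ :=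
  (re_le_norm _).trans_eq (by rw [norm_mul, norm_conj])

theorem re_mul_conj_self (a : ℂ) : (a * conj a).re = ‖a‖ ^ 2 := by
  rw [mul_conj, ofReal_re, normSq_eq_norm_sq]

section DirectionalBounds

variable {w : ℂ → ℂ} {D z₀ : ℂ}

theorem im_mul_mul_conj_eq_zero_of_norm_le (hD : HasDerivAt w D z₀)
    (hmax : ∀ z, ‖z‖ = ‖z₀‖ → ‖w z‖ ≤ ‖w z₀‖) : (z₀ * D * conj (w z₀)).im = 0 := by
  have hγ : HasDerivAt (fun ζ : ℂ => z₀ * exp (ζ * I)) (z₀ * I) ((0 : ℝ) : ℂ) := by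
    simpa using (((hasDerivAt_id (0 : ℂ)).mul_const I).cexp).const_mul z₀
  have hψ := ((hD.comp_of_eq _ hγ (by simp)).mul_const (conj (w z₀))).real_of_complex
  have hmaxψ : IsLocalMax (fun θ : ℝ => (w (z₀ * exp (θ * I)) * conj (w z₀)).re) 0 :=
    Eventually.of_forall fun θ => calc
      _ ≤ ‖w (z₀ * exp (θ * I))‖ * ‖w z₀‖ := re_mul_conj_le_norm_mul_norm _ _
      _ ≤ ‖w z₀‖ * ‖w z₀‖ := by gcongr; exact hmax _ (by simp [norm_exp_ofReal_mul_I])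
      _ = _ := by rw [← sq, ← re_mul_conj_self]; simp
  have h0 := hmaxψ.hasDerivAt_eq_zero hψ
  rwa [show D * (z₀ * I) * conj (w z₀) = I * (z₀ * D * conj (w z₀)) by ring, I_mul_re,
    neg_eq_zero] at h0

theorem sq_norm_le_re_mul_mul_conj_of_norm_le (hD : HasDerivAt w D z₀)
    (hle : ∀ t ∈ Ioo (0 : ℝ) 1, ‖w (t * z₀)‖ ≤ t * ‖w z₀‖) :
    ‖w z₀‖ ^ 2 ≤ (z₀ * D * conj (w z₀)).re := by
  have hγ : HasDerivAt (fun ζ : ℂ => ζ * z₀) z₀ ((1 : ℝ) : ℂ) := by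
    simpa using (hasDerivAt_id (1 : ℂ)).mul_const z₀
  have hφ := (((hD.comp_of_eq _ hγ (by simp)).mul_const (conj (w z₀))).real_of_complex).sub
    ((hasDerivAt_id (1 : ℝ)).const_mul (‖w z₀‖ ^ 2))
  suffices h : 0 ≤ (D * z₀ * conj (w z₀)).re - ‖w z₀‖ ^ 2 * 1 by
    rw [mul_one, mul_comm D] at h; linarith
  refine hφ.nonneg_of_eventually_le_left ?_
  filter_upwards [Ioo_mem_nhdsLT zero_lt_one] with t ht
  change (w (t * z₀) * conj (w z₀)).re - ‖w z₀‖ ^ 2 * t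
    ≤ (w ((1 : ℝ) * z₀) * conj (w z₀)).re - ‖w z₀‖ ^ 2 * 1
  rw [ofReal_one, one_mul, re_mul_conj_self]
  nlinarith [re_mul_conj_le_norm_mul_norm (w (t * z₀)) (w z₀), hle t ht, norm_nonneg (w z₀)]

end DirectionalBounds

theorem jack_lemma {w : ℂ → ℂ} {z₀ : ℂ} {R : ℝ} (hw : DifferentiableOn ℂ w (ball 0 R))
    (hw₀ : w 0 = 0) (hz₀ : z₀ ∈ ball 0 R) (hwz₀ : w z₀ ≠ 0)
    (hmax : ∀ z ∈ closedBall 0 ‖z₀‖, ‖w z‖ ≤ ‖w z₀‖) :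
    ∃ c : ℝ, 1 ≤ c ∧ z₀ * deriv w z₀ = c * w z₀ := by
  set W := w z₀
  set p := z₀ * deriv w z₀ * conj W
  have hr : 0 < ‖z₀‖ := norm_pos_iff.2 (by rintro rfl; exact hwz₀ hw₀)
  have hD : HasDerivAt w (deriv w z₀) z₀ :=
    (hw.differentiableAt (isOpen_ball.mem_nhds hz₀)).hasDerivAt
  have him : p.im = 0 :=
    im_mul_mul_conj_eq_zero_of_norm_le hD fun z hz => hmax z (mem_closedBall_zero_iff.2 hz.le)
  have hschwarz : ∀ z ∈ ball 0 ‖z₀‖, ‖w z‖ ≤ ‖W‖ / ‖z₀‖ * ‖z‖ := fun z hz => by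
    have hmaps : MapsTo w (ball 0 ‖z₀‖) (closedBall (w 0) ‖W‖) := fun z hz => by
      simpa [hw₀] using hmax z (ball_subset_closedBall hz)
    simpa [hw₀] using dist_le_div_mul_dist_of_mapsTo_ball
      (hw.mono (ball_subset_ball (mem_ball_zero_iff.1 hz₀).le)) hmaps hz
  have hre : ‖W‖ ^ 2 ≤ p.re := sq_norm_le_re_mul_mul_conj_of_norm_le hD fun t ⟨ht₀, ht₁⟩ => by
    have htz₀ : ‖(t : ℂ) * z₀‖ = t * ‖z₀‖ := by rw [norm_mul, norm_real, Real.norm_of_nonneg ht₀.le]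
    have h := hschwarz (t * z₀) (by rw [mem_ball_zero_iff, htz₀]; exact mul_lt_of_lt_one_left hr ht₁)
    rwa [htz₀, div_mul_comm, mul_div_cancel_right₀ _ hr.ne'] at h
  refine ⟨p.re / ‖W‖ ^ 2, (one_le_div (by positivity)).2 hre, ?_⟩
  have hp : (p.re : ℂ) = p := Complex.ext rfl (by simp [him])
  have hconj : conj W ≠ 0 := (map_ne_zero _).2 hwz₀
  rw [ofReal_div, hp, ofReal_pow, ← mul_conj']
  field_simp
  rfl

theorem re_div_one_add_of_norm_eq_one {W : ℂ} (hW : ‖W‖ = 1) (h : 1 + W ≠ 0) :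
    (W / (1 + W)).re = 1 / 2 := by
  have hsq : W.re * W.re + W.im * W.im = 1 := by
    rw [← normSq_apply, normSq_eq_norm_sq, hW, one_pow]
  rw [div_re, ← add_div, div_eq_iff (normSq_pos.2 h).ne', normSq_apply]
  simp only [add_re, add_im, one_re, one_im]
  linear_combination (1 / 2 : ℝ) * hsq

theorem singh_singh_criterion_general (f : ℂ → ℂ)
    (hf : DifferentiableOn ℂ f (ball (0:ℂ) 1))
    (hf'0 : deriv f 0 = 1)
    (lam : ℝ) (hlam : 0 ≤ lam)
    (hne : ∀ z ∈ ball (0:ℂ) 1, deriv f z ≠ 0)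
    (hineq : ∀ z ∈ ball (0:ℂ) 1,
      ‖deriv f z - 1‖ ^ (1 - lam) * ‖1 + z * deriv (deriv f) z / deriv f z‖ ^ lam
        < (3/2 : ℝ) ^ lam) :
    ∀ z ∈ ball (0:ℂ) 1, ‖deriv f z - 1‖ < 1 := by
  set w : ℂ → ℂ := fun z => deriv f z - 1
  have hw : DifferentiableOn ℂ w (ball 0 1) :=
    (hf.analyticOnNhd isOpen_ball).deriv.differentiableOn.sub_const 1
  have hw₀ : w 0 = 0 := by simp [w, hf'0]
  by_contra! ⟨z₁, hz₁, hwz₁⟩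
  obtain ⟨z₀, hz₀, hwz₀, hmax⟩ :=
    exists_norm_eq_forall_closedBall_norm_le hw.continuousOn (by simp [hw₀]) hz₁ hwz₁
  obtain ⟨c, hc, hjack⟩ :=
    jack_lemma hw hw₀ hz₀ (norm_ne_zero_iff.1 (by simp [hwz₀])) (hwz₀ ▸ hmax)
  have hf' : deriv f z₀ = 1 + w z₀ := by simp [w]
  have hf'' : deriv (deriv f) z₀ = deriv w z₀ := by simp [w, deriv_sub_const]
  have h32 : (3 / 2 : ℝ) ≤ ‖1 + z₀ * deriv (deriv f) z₀ / deriv f z₀‖ := by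
    rw [hf'', hf', hjack, mul_div_assoc]
    calc (3 / 2 : ℝ) ≤ 1 + c * (1 / 2) := by linarith
      _ = (1 + c * (w z₀ / (1 + w z₀))).re := by
        simp [re_div_one_add_of_norm_eq_one hwz₀ (hf' ▸ hne z₀ hz₀)]
      _ ≤ _ := re_le_norm _
  have hz₀ineq := hineq z₀ hz₀
  rw [show ‖deriv f z₀ - 1‖ = 1 from hwz₀, Real.one_rpow, one_mul] at hz₀ineq
  exact hz₀ineq.not_ge (Real.rpow_le_rpow (by norm_num) h32 hlam)

theorem singh_singh_criterion (f : ℂ → ℂ)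
    (hf : DifferentiableOn ℂ f (ball (0:ℂ) 1))
    (hf0 : f 0 = 0) (hf'0 : deriv f 0 = 1)
    (lam : ℝ) (hlam : 0 ≤ lam)
    (hne : ∀ z ∈ ball (0:ℂ) 1, deriv f z ≠ 0)
    (hineq : ∀ z ∈ ball (0:ℂ) 1,
      ‖deriv f z - 1‖ ^ (1 - lam) * ‖1 + z * deriv (deriv f) z / deriv f z‖ ^ lam
        < (3/2 : ℝ) ^ lam) :
    ∀ z ∈ ball (0:ℂ) 1, ‖deriv f z - 1‖ < 1 :=
  singh_singh_criterion_general f hf hf'0 lam hlam hne hineq
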